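/- arXiv:1501.00894 — 2 statements merged into one kernel-verified Lean document; each statement's English description precedes it below -/
import Mathlib

section
/- Let t be a linear term over a signature F and variables V, let G be an acyclic term graph over F, and let n be a node of G. If there exists a homomorphism φ from the canonical tree T(t) to the sub-graph G↾n of G rooted at n, then there exists a substitution σ such that tσ equals the unfolding [n]_G of G at n; moreover σ can be chosen so that σ(x) = [φ(n_x)]_G for every variable x occurring in t. -/
namespace TGraph

/-- Terms over a signature `F` and variables `V`. -/
inductive Tm (F V : Type) : Type
  | var : V → Tm F V
  | app : F → List (Tm F V) → Tm F V

/-- Substitution. -/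
def subst {F V : Type} (σ : V → Tm F V) : Tm F V → Tm F V
  | .var x => σ x
  | .app f ts => .app f (ts.attach.map fun t => subst σ t.1)
decreasing_by
  all_goals simp_wf
  all_goals (have := List.sizeOf_lt_of_mem t.2; omega)

/-- `SubAt t p u`: `u` is the subterm of `t` at position `p`.  The positions of `t`
are exactly the nodes of the canonical tree `T(t)` of `t`. -/
inductive SubAt {F V : Type} : Tm F V → List ℕ → Tm F V → Prop
  | refl (t : Tm F V) : SubAt t [] t
  | step {f : F} {ts : List (Tm F V)} {i : ℕ} {t u : Tm F V} {p : List ℕ} :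
      ts[i]? = some t → SubAt t p u → SubAt (.app f ts) (i :: p) u

/-- Linear terms: every variable occurs at most once. -/
def Linear {F V : Type} (t : Tm F V) : Prop :=
  ∀ (x : V) (p q : List ℕ), SubAt t p (.var x) → SubAt t q (.var x) → p = q

/-- A term graph over the signature `F` (with arities `ar`) and variables `V`, with
nodes drawn from `L`: a labeled graph compatible with the signature. -/
structure TermGraph (F V L : Type) (ar : F → ℕ) where
  nodes : Set L
  lab : L → F ⊕ V
  succ : L → List L
  compat_fun : ∀ n ∈ nodes, ∀ f, lab n = Sum.inl f →
    (succ n).length = ar f ∧ ∀ m ∈ succ n, m ∈ nodes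
  compat_var : ∀ n ∈ nodes, ∀ v, lab n = Sum.inr v → succ n = []

/-- Acyclicity of a term graph: the successor relation is well-founded. -/
def Acyclic {F V L : Type} {ar : F → ℕ} (G : TermGraph F V L ar) : Prop :=
  WellFounded (fun a b => b ∈ G.nodes ∧ a ∈ G.succ b)

/-- `Unfolds G n t`: `t = [n]_G` is the unfolding of the term graph `G` at node `n`. -/
inductive Unfolds {F V L : Type} {ar : F → ℕ} (G : TermGraph F V L ar) : L → Tm F V → Prop
  | var {n : L} {x : V} : G.lab n = Sum.inr x → Unfolds G n (.var x)
  | app {n : L} {f : F} {ts : List (Tm F V)} : G.lab n = Sum.inl f →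
      (G.succ n).length = ts.length →
      (∀ (i : ℕ) (m : L) (t : Tm F V), (G.succ n)[i]? = some m → ts[i]? = some t →
        Unfolds G m t) →
      Unfolds G n (.app f ts)

/-- `TreeHom t G n φ`: `φ` is a homomorphism from the canonical tree `T(t)` of `t`
(whose nodes are the positions of `t`) to the sub-graph `G↾n` of `G` rooted at `n`:
the root `[]` of `T(t)` is mapped to `n`, nodes are mapped to nodes, and `φ` is morphic
at every position not labeled by a variable. -/
def TreeHom {F V L : Type} {ar : F → ℕ} (t : Tm F V) (G : TermGraph F V L ar) (n : L)
    (φ : List ℕ → L) : Prop :=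
  φ [] = n ∧
  (∀ p u, SubAt t p u → φ p ∈ G.nodes) ∧
  (∀ p f ts, SubAt t p (.app f ts) →
    G.lab (φ p) = Sum.inl f ∧ (G.succ (φ p)).length = ts.length ∧
    ∀ i : ℕ, i < ts.length → (G.succ (φ p))[i]? = some (φ (p ++ [i])))

end TGraph

/-!
Since `G` is acyclic, well-founded recursion along the successor relation unfolds every node
of `G`. Linearity lets us set `σ(x) := [φ(n_x)]_G` unambiguously for every variable `x` of `t`,
and induction on `t` shows that `tσ` unfolds at `φ` of the root: at a variable position this is
the choice of `σ`, and at a function position `φ` is morphic, so the unfoldings of the children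
of the image node are the instances of the arguments.
-/

theorem List.exists_forall₂_of_forall_mem {α β : Type*} {R : α → β → Prop} :
    ∀ {l : List α}, (∀ a ∈ l, ∃ b, R a b) → ∃ l', List.Forall₂ R l l'
  | [], _ => ⟨[], .nil⟩
  | a :: l, h => by
    obtain ⟨b, hb⟩ := h a List.mem_cons_self
    obtain ⟨l', hl'⟩ := exists_forall₂_of_forall_mem fun x hx => h x (List.mem_cons_of_mem a hx)
    exact ⟨b :: l', .cons hb hl'⟩

namespace TGraph

section

variable {F V L : Type} {ar : F → ℕ} {G : TermGraph F V L ar}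

theorem Unfolds.app_of_forall₂ {n : L} {f : F} {ts : List (Tm F V)} (hlab : G.lab n = .inl f)
    (hts : List.Forall₂ (Unfolds G) (G.succ n) ts) : Unfolds G n (.app f ts) := by
  refine .app hlab hts.length_eq fun i m u hm hu => ?_
  obtain ⟨hi, rfl⟩ := List.getElem?_eq_some_iff.1 hm
  obtain ⟨hi', rfl⟩ := List.getElem?_eq_some_iff.1 hu
  exact hts.get hi hi'

theorem Acyclic.exists_unfolds (hG : Acyclic G) {n : L} (hn : n ∈ G.nodes) :
    ∃ u, Unfolds G n u := by
  induction n using hG.induction with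
  | _ n ih =>
    cases hlab : G.lab n with
    | inr x => exact ⟨.var x, .var hlab⟩
    | inl f =>
      have hsucc := (G.compat_fun n hn f hlab).2
      obtain ⟨ts, hts⟩ :=
        List.exists_forall₂_of_forall_mem fun m hm => ih m ⟨hn, hm⟩ (hsucc m hm)
      exact ⟨.app f ts, .app_of_forall₂ hlab hts⟩

theorem TreeHom.child {n : L} {φ : List ℕ → L} {f : F} {ts : List (Tm F V)} {i : ℕ}
    {u : Tm F V} (hφ : TreeHom (.app f ts) G n φ) (hu : ts[i]? = some u) :
    TreeHom u G (φ [i]) (fun q => φ (i :: q)) :=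
  ⟨rfl, fun _ _ hq => hφ.2.1 _ _ (.step hu hq), fun _ _ _ hq => hφ.2.2 _ _ _ (.step hu hq)⟩

theorem TreeHom.unfolds_subst {σ : V → Tm F V} {t : Tm F V} {n : L} {φ : List ℕ → L}
    (hφ : TreeHom t G n φ) (hσ : ∀ x p, SubAt t p (.var x) → Unfolds G (φ p) (σ x)) :
    Unfolds G n (subst σ t) := by
  induction t using subst.induct generalizing n φ with
  | case1 x =>
    rw [subst, ← hφ.1]
    exact hσ x [] (.refl _)
  | case2 f ts ih =>
    obtain ⟨hlab, hlen, hsucc⟩ := hφ.2.2 [] f ts (.refl _)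
    rw [hφ.1] at hlab hlen hsucc
    rw [subst]
    refine .app_of_forall₂ hlab (List.forall₂_of_length_eq_of_get (by simpa using hlen) ?_)
    intro i hi _
    have hu : ts[i]? = some ts[i] := List.getElem?_eq_getElem (hlen ▸ hi)
    have hchild : (G.succ n)[i] = φ [i] := (List.getElem_eq_iff _).2 (hsucc i (hlen ▸ hi))
    simpa [hchild] using
      ih ⟨ts[i], List.getElem_mem _⟩ (hφ.child hu) fun x p hp => hσ x (i :: p) (.step hu hp)

theorem Linear.exists_subst_unfolds (hG : Acyclic G) {t : Tm F V} (hlin : Linear t)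
    {φ : List ℕ → L} (hφ : ∀ p u, SubAt t p u → φ p ∈ G.nodes) :
    ∃ σ : V → Tm F V, ∀ x p, SubAt t p (.var x) → Unfolds G (φ p) (σ x) := by
  suffices ∀ x, ∃ u, ∀ p, SubAt t p (.var x) → Unfolds G (φ p) u from Classical.skolem.mp this
  intro x
  by_cases hx : ∃ p, SubAt t p (.var x)
  · obtain ⟨p, hp⟩ := hx
    obtain ⟨u, hu⟩ := hG.exists_unfolds (hφ p _ hp)
    exact ⟨u, fun q hq => hlin x p q hp hq ▸ hu⟩
  · exact ⟨.var x, fun p hp => absurd ⟨p, hp⟩ hx⟩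

end

theorem statement0_general {F V L : Type} {ar : F → ℕ} (G : TermGraph F V L ar)
    (hacyc : Acyclic G)
    (t : Tm F V) (hlin : Linear t) (n : L)
    (φ : List ℕ → L) (hφ : TreeHom t G n φ) :
    ∃ σ : V → Tm F V, Unfolds G n (subst σ t) ∧
      ∀ (x : V) (p : List ℕ), SubAt t p (.var x) → Unfolds G (φ p) (σ x) := by
  obtain ⟨σ, hσ⟩ := hlin.exists_subst_unfolds hacyc hφ.2.1
  exact ⟨σ, hφ.unfolds_subst hσ, hσ⟩

/-- Proposition 3.(1) / Matching on Graphs, first direction.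
If there is a homomorphism `φ` from the canonical tree `T(t)` of a linear term `t` to
the sub-graph of the (finite, acyclic) term graph `G` rooted at the node `n`, then there
is a substitution `σ` with `tσ = [n]_G`; moreover `σ` can be chosen such that
`σ(x) = [φ(n_x)]_G` for every variable `x` occurring in `t`. -/
theorem statement0 {F V L : Type} {ar : F → ℕ} (G : TermGraph F V L ar)
    (hfin : G.nodes.Finite) (hacyc : Acyclic G)
    (t : Tm F V) (hlin : Linear t) (n : L) (hn : n ∈ G.nodes)
    (φ : List ℕ → L) (hφ : TreeHom t G n φ) :
    ∃ σ : V → Tm F V, Unfolds G n (subst σ t) ∧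
      ∀ (x : V) (p : List ℕ), SubAt t p (.var x) → Unfolds G (φ p) (σ x) :=
  statement0_general G hacyc t hlin n φ hφ

end TGraph
end

section
/- Let t be a linear term over a signature F and variables V, let G be an acyclic term graph over F, and let n be a node of G. If tσ = [n]_G for some substitution σ, then there exists a homomorphism φ from the canonical tree T(t) to the sub-graph G↾n rooted at n, and φ can be chosen so that σ(x) = [φ(n_x)]_G for every variable x occurring in t. -/
/-! The homomorphism sends a position `p` of `t` to the node reached from `n` by following
the successor indices in `p`. Since `[n]_G = tσ`, this walk stays inside `G` and ends at a
node unfolding to the subterm `(tσ)|_p`, which is `(t|_p)σ`; for `t|_p = f(…)` this forces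
the morphism conditions, and for `t|_p = x` it gives `[φ(p)]_G = σ(x)`. -/

namespace TGraph

/-- `G.follow n p` walks from `n` along the successor indices listed in `p`; an index
out of range leaves the walk where it is (never the case along a position of an unfolding). -/
def TermGraph.follow {F V L : Type} {ar : F → ℕ} (G : TermGraph F V L ar) : L → List ℕ → L
  | n, [] => n
  | n, i :: p => G.follow ((G.succ n).getD i n) p

section

variable {F V L : Type} {ar : F → ℕ} (G : TermGraph F V L ar)

theorem TermGraph.follow_append (n : L) (p q : List ℕ) :
    G.follow n (p ++ q) = G.follow (G.follow n p) q := by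
  induction p generalizing n with
  | nil => rfl
  | cons i p ih => exact ih _

theorem TermGraph.follow_singleton (n : L) (i : ℕ) :
    G.follow n [i] = (G.succ n).getD i n := rfl

variable {G}

theorem subst_app (σ : V → Tm F V) (f : F) (ts : List (Tm F V)) :
    subst σ (.app f ts) = .app f (ts.map (subst σ)) := by
  rw [subst, List.map_attach_eq_pmap, List.pmap_eq_map]

theorem SubAt.subst {t u : Tm F V} {p : List ℕ} (h : SubAt t p u) (σ : V → Tm F V) :
    SubAt (subst σ t) p (subst σ u) := by
  induction h with
  | refl t => exact .refl _
  | step hts _ ih =>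
    rw [subst_app]
    exact .step (by rw [List.getElem?_map, hts]; rfl) ih

theorem Unfolds.morphic {m : L} {f : F} {us : List (Tm F V)} (h : Unfolds G m (.app f us)) :
    G.lab m = .inl f ∧ (G.succ m).length = us.length ∧
      ∀ i < us.length, (G.succ m)[i]? = some (G.follow m [i]) := by
  cases h with
  | app hlab hlen _ =>
    refine ⟨hlab, hlen, fun i hi => ?_⟩
    rw [G.follow_singleton, List.getD_eq_getElem _ _ (hlen ▸ hi), List.getElem?_eq_getElem]

theorem Unfolds.child {m : L} {f : F} {us : List (Tm F V)} {i : ℕ} {u : Tm F V}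
    (hm : m ∈ G.nodes) (h : Unfolds G m (.app f us)) (hu : us[i]? = some u) :
    G.follow m [i] ∈ G.nodes ∧ Unfolds G (G.follow m [i]) u := by
  have hi : i < us.length := (List.getElem?_eq_some_iff.mp hu).1
  obtain ⟨hlab, -, hsucc⟩ := h.morphic
  have hchild := hsucc i hi
  cases h with
  | app _ _ hunf =>
    exact ⟨(G.compat_fun m hm f hlab).2 _ (List.mem_of_getElem? hchild), hunf i _ _ hchild hu⟩

theorem Unfolds.follow {n : L} {s u : Tm F V} {p : List ℕ} (hn : n ∈ G.nodes)
    (h : Unfolds G n s) (hp : SubAt s p u) :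
    G.follow n p ∈ G.nodes ∧ Unfolds G (G.follow n p) u := by
  induction hp generalizing n with
  | refl => exact ⟨hn, h⟩
  | step hts _ ih =>
    obtain ⟨hm, hunf⟩ := h.child hn hts
    exact ih hm hunf

end

theorem statement1_general {F V L : Type} {ar : F → ℕ} (G : TermGraph F V L ar)
    (t : Tm F V) (n : L) (hn : n ∈ G.nodes)
    (σ : V → Tm F V) (hu : Unfolds G n (subst σ t)) :
    ∃ φ : List ℕ → L, TreeHom t G n φ ∧
      ∀ (x : V) (p : List ℕ), SubAt t p (.var x) → Unfolds G (φ p) (σ x) := by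
  have hfollow {p u} (hp : SubAt t p u) := hu.follow hn (hp.subst σ)
  refine ⟨G.follow n, ⟨rfl, fun p _ hp => (hfollow hp).1, fun p f ts hp => ?_⟩,
    fun x p hp => by simpa only [subst] using (hfollow hp).2⟩
  have hunf := (hfollow hp).2
  rw [subst_app] at hunf
  obtain ⟨hlab, hlen, hsucc⟩ := hunf.morphic
  rw [List.length_map] at hlen hsucc
  exact ⟨hlab, hlen, fun i hi => by rw [G.follow_append]; exact hsucc i hi⟩

/-- Proposition 3.(2) / Matching on Graphs, second direction.
If `tσ = [n]_G` for a linear term `t`, a substitution `σ` and a node `n` of the (finite,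
acyclic) term graph `G`, then there is a homomorphism `φ` from the canonical tree `T(t)`
to the sub-graph of `G` rooted at `n`; moreover `φ` can be chosen such that
`σ(x) = [φ(n_x)]_G` for every variable `x` occurring in `t`. -/
theorem statement1 {F V L : Type} {ar : F → ℕ} (G : TermGraph F V L ar)
    (hfin : G.nodes.Finite) (hacyc : Acyclic G)
    (t : Tm F V) (hlin : Linear t) (n : L) (hn : n ∈ G.nodes)
    (σ : V → Tm F V) (hu : Unfolds G n (subst σ t)) :
    ∃ φ : List ℕ → L, TreeHom t G n φ ∧
      ∀ (x : V) (p : List ℕ), SubAt t p (.var x) → Unfolds G (φ p) (σ x) :=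
  statement1_general G t n hn σ hu

end TGraph
end
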